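/- Let T and T' be reduction operators relative to (X*, <) with ker(T) ⊆ ker(T'), let w be a monomial, and let f ∈ K⟨X*⟩ admit a (T, w)-type decomposition. Then f admits a (T', w)-type decomposition. -/

import Mathlib

/-- A reduction operator relative to `(X*, <)`: an idempotent `K`-linear endomorphism `T`
of the free algebra `K⟨X*⟩ = MonoidAlgebra K (FreeMonoid X)` such that `T w ≤ w` for every
monomial `w`, i.e. `T` fixes the basis vector of `w`, or every monomial in the support of
its image is strictly smaller than `w`. -/
def IsReductionOperator {K M : Type*} [Field K] [Monoid M] [LinearOrder M]
    (T : MonoidAlgebra K M →ₗ[K] MonoidAlgebra K M) : Prop :=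
  T ∘ₗ T = T ∧ ∀ w : M,
    T (MonoidAlgebra.single w 1) = MonoidAlgebra.single w 1 ∨
      ∀ u ∈ (T (MonoidAlgebra.single w 1)).coeff.support, u < w

/-- The operator `S_{n,m}` : it fixes monomials of length `< n + m`, and sends
`w = w₁w₂w₃` with `|w₁| = n`, `|w₃| = m` to `w₁ ⬝ S(w₂) ⬝ w₃`. -/
noncomputable def extOp {K X : Type*} [Field K]
    (S : MonoidAlgebra K (FreeMonoid X) →ₗ[K] MonoidAlgebra K (FreeMonoid X)) (n m : ℕ) :
    MonoidAlgebra K (FreeMonoid X) →ₗ[K] MonoidAlgebra K (FreeMonoid X) :=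
  (Finsupp.lift (MonoidAlgebra K (FreeMonoid X)) K (FreeMonoid X) fun w =>
    if w.length < n + m then MonoidAlgebra.single w 1
    else
      MonoidAlgebra.single (FreeMonoid.ofList (w.toList.take n)) (1 : K) *
        S (MonoidAlgebra.single
            (FreeMonoid.ofList ((w.toList.drop n).take (w.toList.length - n - m))) 1) *
        MonoidAlgebra.single (FreeMonoid.ofList (w.toList.drop (w.toList.length - m))) (1 : K))
    ∘ₗ (MonoidAlgebra.coeffLinearEquiv K).toLinearMap

/-- `f` admits a `(T, w)`-type decomposition:
`f = ∑ᵢ λᵢ w¹ᵢ (wᵢ − T(wᵢ)) w²ᵢ` with each `λᵢ ≠ 0`, each `wᵢ` `T`-reducible, and each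
monomial `w¹ᵢ wᵢ w²ᵢ` strictly smaller than `w`. -/
def HasTypeDecomp {K X : Type*} [Field K] [LinearOrder (FreeMonoid X)]
    (T : MonoidAlgebra K (FreeMonoid X) →ₗ[K] MonoidAlgebra K (FreeMonoid X))
    (w : FreeMonoid X) (f : MonoidAlgebra K (FreeMonoid X)) : Prop :=
  ∃ (k : ℕ) (c : Fin k → K) (a b wm : Fin k → FreeMonoid X),
    (∀ i, c i ≠ 0) ∧
    (∀ i, T (MonoidAlgebra.single (wm i) 1) ≠ MonoidAlgebra.single (wm i) 1) ∧
    (∀ i, a i * wm i * b i < w) ∧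
    f = ∑ i, c i • (MonoidAlgebra.single (a i) 1 *
      (MonoidAlgebra.single (wm i) 1 - T (MonoidAlgebra.single (wm i) 1)) *
      MonoidAlgebra.single (b i) 1)

/-!
Both kinds of decomposition say that `f` lies in the span of the elements `a (u - T u) b`
with `u` `T`-reducible and `a u b < w`. The leading monomial `u` of a nonzero `g ∈ ker T` is
`T`-reducible, since otherwise `T g` would keep its coefficient; subtracting the matching
multiple of `u - T u` stays in `ker T` and lowers the leading monomial, so by well-founded
induction `g` is a combination of such reductions with `u` below any strict bound on the
monomials of `g`. Now `u - T u ∈ ker T'` forces `u` to be `T'`-reducible, and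
`u - T u = (u - T' u) + (T' u - T u)`, where the second summand lies in `ker T'` and has only
monomials `< u`. Multiplying by `a` and `b` keeps all these monomials below `w` because the
order is compatible with multiplication.
-/

open MonoidAlgebra Submodule

theorem exists_fin_sum_smul_eq_of_ne_zero {R N ι : Type*} [Semiring R] [AddCommMonoid N]
    [Module R N] [Fintype ι] (c : ι → R) (v : ι → N) :
    ∃ (n : ℕ) (e : Fin n → ι),
      (∀ j, c (e j) ≠ 0) ∧ ∑ j, c (e j) • v (e j) = ∑ i, c i • v i := by
  classical
  let σ := Fintype.equivFin {i // c i ≠ 0}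
  refine ⟨Fintype.card {i // c i ≠ 0}, fun j => σ.symm j, fun j => (σ.symm j).2, ?_⟩
  rw [σ.symm.sum_comp (fun i : {i // c i ≠ 0} => c i • v i),
    ← Fintype.sum_subtype_add_sum_subtype (fun i => c i ≠ 0),
    Fintype.sum_eq_zero (fun i : {i // ¬c i ≠ 0} => c i • v i) fun i => by
      rw [not_not.mp i.2, zero_smul],
    add_zero]

section ReductionOperator

variable {K M : Type*} [Field K]

def reductionDiffs (T : MonoidAlgebra K M →ₗ[K] MonoidAlgebra K M) (s : Set M) :
    Set (MonoidAlgebra K M) :=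
  (fun v => single v 1 - T (single v 1)) '' {v ∈ s | T (single v 1) ≠ single v 1}

theorem reductionDiffs_mono (T : MonoidAlgebra K M →ₗ[K] MonoidAlgebra K M) {s t : Set M}
    (hst : s ⊆ t) : reductionDiffs T s ⊆ reductionDiffs T t :=
  Set.image_mono fun _ hv => ⟨hst hv.1, hv.2⟩

variable [Monoid M] [LinearOrder M]

namespace IsReductionOperator

variable {T : MonoidAlgebra K M →ₗ[K] MonoidAlgebra K M}

theorem apply_apply (hT : IsReductionOperator T) (x : MonoidAlgebra K M) : T (T x) = T x :=
  LinearMap.congr_fun hT.1 x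

theorem lt_of_mem_support_apply_single (hT : IsReductionOperator T) {u v : M}
    (hu : T (single u 1) ≠ single u 1) (hv : v ∈ (T (single u 1)).coeff.support) : v < u :=
  (hT.2 u).resolve_left hu v hv

theorem le_of_mem_support_apply_single (hT : IsReductionOperator T) {u v : M}
    (hv : v ∈ (T (single u 1)).coeff.support) : v ≤ u := by
  by_cases hu : T (single u 1) = single u 1
  · rw [hu, coeff_single] at hv
    exact (Finset.mem_singleton.mp (Finsupp.support_single_subset hv)).le
  · exact (hT.lt_of_mem_support_apply_single hu hv).le

theorem coeff_apply_eq_zero (hT : IsReductionOperator T) {g : MonoidAlgebra K M} {u : M}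
    (hg : ∀ v ∈ g.coeff.support, v < u) : (T g).coeff u = 0 := by
  conv_lhs => rw [← sum_coeff_single g]
  rw [Finsupp.sum, map_sum, coeff_sum, Finsupp.finsetSum_apply]
  refine Finset.sum_eq_zero fun v hv => ?_
  rw [← mul_one (g.coeff v), ← smul_single', map_smul, coeff_smul_apply,
    Finsupp.notMem_support_iff.mp fun h => (hT.le_of_mem_support_apply_single h).not_gt (hg v hv),
    smul_zero]

theorem coeff_eq_zero_of_apply_eq_zero (hT : IsReductionOperator T) {g : MonoidAlgebra K M}
    {u : M} (hg : T g = 0) (hsupp : ∀ v ∈ g.coeff.support, v ≤ u)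
    (hu : T (single u 1) = single u 1) : g.coeff u = 0 := by
  have hrest : (T (g.erase u)).coeff u = 0 := hT.coeff_apply_eq_zero fun v hv => by
    rw [coeff_erase, Finsupp.support_erase, Finset.mem_erase] at hv
    exact (hsupp v hv.2).lt_of_ne hv.1
  have hlead : T (single u (g.coeff u)) = single u (g.coeff u) := by
    rw [← mul_one (g.coeff u), ← smul_single', map_smul, hu]
  have hsplit : (T (single u (g.coeff u)) + T (g.erase u)).coeff u = 0 := by
    rw [← map_add, single_add_erase, hg, coeff_zero, Finsupp.zero_apply]
  rwa [coeff_add, Finsupp.add_apply, hlead, hrest, coeff_single, Finsupp.single_eq_same,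
    add_zero] at hsplit

theorem mem_span_reductionDiffs_Iio [WellFoundedLT M] (hT : IsReductionOperator T) (B : M)
    {g : MonoidAlgebra K M} (hg : T g = 0) (hsupp : ∀ v ∈ g.coeff.support, v < B) :
    g ∈ span K (reductionDiffs T (Set.Iio B)) := by
  induction B using WellFoundedLT.induction generalizing g with
  | ind B IH =>
  rcases eq_or_ne g 0 with rfl | hg0
  · exact zero_mem _
  have hne : g.coeff.support.Nonempty := Finsupp.support_nonempty_iff.mpr (by simpa using hg0)
  set u := g.coeff.support.max' hne
  have hmax : ∀ v ∈ g.coeff.support, v ≤ u := fun v hv => g.coeff.support.le_max' v hv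
  have huB : u < B := hsupp u (g.coeff.support.max'_mem hne)
  have hu : T (single u 1) ≠ single u 1 := fun h =>
    Finsupp.mem_support_iff.mp (g.coeff.support.max'_mem hne)
      (hT.coeff_eq_zero_of_apply_eq_zero hg hmax h)
  set g' := g - g.coeff u • (single u 1 - T (single u 1))
  have hg' : T g' = 0 := by
    simp only [g', map_sub, map_smul, hT.apply_apply, hg, sub_self, smul_zero]
  have hsupp' : ∀ v ∈ g'.coeff.support, v < u := by
    intro v hv
    by_contra! huv
    have hTv : (T (single u 1)).coeff v = 0 := Finsupp.notMem_support_iff.mp fun h =>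
      (hT.lt_of_mem_support_apply_single hu h).not_ge huv
    apply Finsupp.mem_support_iff.mp hv
    simp only [g', coeff_sub, coeff_smul, Finsupp.sub_apply, Finsupp.smul_apply, coeff_single,
      hTv, sub_zero, smul_eq_mul]
    rcases huv.eq_or_lt with rfl | hlt
    · simp
    · have hgv : g.coeff v = 0 :=
        Finsupp.notMem_support_iff.mp fun h => (hmax v h).not_gt hlt
      simp [hgv, Finsupp.single_eq_of_ne hlt.ne']
  have hdecomp : g = g' + g.coeff u • (single u 1 - T (single u 1)) := by
    simp only [g', sub_add_cancel]
  rw [hdecomp]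
  exact add_mem
    (span_mono (reductionDiffs_mono T (Set.Iio_subset_Iio huB.le)) (IH u huB hg' hsupp'))
    (smul_mem _ _ (subset_span ⟨u, ⟨huB, hu⟩, rfl⟩))

end IsReductionOperator

end ReductionOperator

section TypeDecomposition

variable {K M : Type*} [Field K] [Monoid M] [LinearOrder M]

theorem sub_apply_single_mem_span_reductionDiffs_Iic [WellFoundedLT M]
    {T T' : MonoidAlgebra K M →ₗ[K] MonoidAlgebra K M} (hT : IsReductionOperator T)
    (hT' : IsReductionOperator T') (hker : LinearMap.ker T ≤ LinearMap.ker T') {u : M}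
    (hu : T (single u 1) ≠ single u 1) :
    single u 1 - T (single u 1) ∈ span K (reductionDiffs T' (Set.Iic u)) := by
  have hker' : T' (single u 1 - T (single u 1)) = 0 :=
    hker (by simp only [LinearMap.mem_ker, map_sub, hT.apply_apply, sub_self])
  have hTu : ∀ v ∈ (T (single u 1)).coeff.support, v < u :=
    fun _ => hT.lt_of_mem_support_apply_single hu
  have hu' : T' (single u 1) ≠ single u 1 := by
    intro h
    have hsupp : ∀ v ∈ (single u 1 - T (single u 1)).coeff.support, v ≤ u := by
      intro v hv
      rcases Finset.mem_union.mp (Finsupp.support_sub hv) with h | h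
      · exact (Finset.mem_singleton.mp (Finsupp.support_single_subset h)).le
      · exact (hTu v h).le
    have hTuu : (T (single u 1)).coeff u = 0 :=
      Finsupp.notMem_support_iff.mp fun h => (hTu u h).false
    simpa [coeff_sub, hTuu] using hT'.coeff_eq_zero_of_apply_eq_zero hker' hsupp h
  have hrest : T' (T' (single u 1) - T (single u 1)) = 0 := by
    rwa [map_sub, hT'.apply_apply, ← map_sub]
  have hrest_supp : ∀ v ∈ (T' (single u 1) - T (single u 1)).coeff.support, v < u := by
    intro v hv
    rcases Finset.mem_union.mp (Finsupp.support_sub hv) with h | h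
    · exact hT'.lt_of_mem_support_apply_single hu' h
    · exact hTu v h
  rw [← sub_add_sub_cancel _ (T' (single u 1))]
  exact add_mem (subset_span ⟨u, ⟨le_rfl, hu'⟩, rfl⟩)
    (span_mono (reductionDiffs_mono T' Set.Iio_subset_Iic_self)
      (hT'.mem_span_reductionDiffs_Iio u hrest hrest_supp))

def typeDecompGens (T : MonoidAlgebra K M →ₗ[K] MonoidAlgebra K M) (w : M) :
    Set (MonoidAlgebra K M) :=
  {x | ∃ a u b, T (single u 1) ≠ single u 1 ∧ a * u * b < w ∧
    x = single a 1 * (single u 1 - T (single u 1)) * single b 1}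

theorem typeDecompGens_subset_span [WellFoundedLT M]
    (hmul : ∀ w w' a b : M, w < w' → a * w * b < a * w' * b)
    {T T' : MonoidAlgebra K M →ₗ[K] MonoidAlgebra K M} (hT : IsReductionOperator T)
    (hT' : IsReductionOperator T') (hker : LinearMap.ker T ≤ LinearMap.ker T') (w : M) :
    typeDecompGens T w ⊆ span K (typeDecompGens T' w) := by
  rintro _ ⟨a, u, b, hu, hlt, rfl⟩
  let φ : MonoidAlgebra K M →ₗ[K] MonoidAlgebra K M :=
    LinearMap.mulLeft K (single a 1) ∘ₗ LinearMap.mulRight K (single b 1)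
  have hφ : φ '' reductionDiffs T' (Set.Iic u) ⊆ typeDecompGens T' w := by
    rintro _ ⟨_, ⟨v, ⟨hvu, hv⟩, rfl⟩, rfl⟩
    refine ⟨a, v, b, hv, ?_, by simp [φ, mul_assoc]⟩
    rcases hvu.eq_or_lt with rfl | hvu
    exacts [hlt, (hmul _ _ a b hvu).trans hlt]
  have hmem :=
    mem_map_of_mem (f := φ) (sub_apply_single_mem_span_reductionDiffs_Iic hT hT' hker hu)
  rw [← span_image] at hmem
  simpa [φ, mul_assoc] using span_mono hφ hmem

end TypeDecomposition

theorem hasTypeDecomp_iff_mem_span {K X : Type*} [Field K] [LinearOrder (FreeMonoid X)]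
    (T : MonoidAlgebra K (FreeMonoid X) →ₗ[K] MonoidAlgebra K (FreeMonoid X))
    (w : FreeMonoid X) (f : MonoidAlgebra K (FreeMonoid X)) :
    HasTypeDecomp T w f ↔ f ∈ span K (typeDecompGens T w) := by
  constructor
  · rintro ⟨k, c, a, b, u, -, hu, hlt, rfl⟩
    exact sum_mem fun i _ => smul_mem _ _ (subset_span ⟨a i, u i, b i, hu i, hlt i, rfl⟩)
  · rw [mem_span_set']
    rintro ⟨n, c, g, rfl⟩
    obtain ⟨m, e, hc, hsum⟩ :=
      exists_fin_sum_smul_eq_of_ne_zero c fun i => (g i : MonoidAlgebra K (FreeMonoid X))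
    choose a u b hu hlt hg using fun j => (g (e j)).2
    refine ⟨m, c ∘ e, a, b, u, hc, hu, hlt, ?_⟩
    rw [← hsum]
    exact Finset.sum_congr rfl fun j _ => by rw [Function.comp_apply, hg j]

theorem stmt_14_general {K X : Type*} [Field K]
    [LinearOrder (FreeMonoid X)] [WellFoundedLT (FreeMonoid X)]
    (hmul : ∀ w w' a b : FreeMonoid X, w < w' → a * w * b < a * w' * b)
    (T T' : MonoidAlgebra K (FreeMonoid X) →ₗ[K] MonoidAlgebra K (FreeMonoid X))
    (hT : IsReductionOperator T) (hT' : IsReductionOperator T')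
    (hker : LinearMap.ker T ≤ LinearMap.ker T')
    (w : FreeMonoid X) (f : MonoidAlgebra K (FreeMonoid X))
    (hf : HasTypeDecomp T w f) :
    HasTypeDecomp T' w f := by
  rw [hasTypeDecomp_iff_mem_span] at hf ⊢
  exact span_le.mpr (typeDecompGens_subset_span hmul hT hT' hker w) hf

theorem stmt_14 {K X : Type*} [Field K]
    [LinearOrder (FreeMonoid X)] [WellFoundedLT (FreeMonoid X)]
    (hone : ∀ w : FreeMonoid X, w ≠ 1 → 1 < w)
    (hmul : ∀ w w' a b : FreeMonoid X, w < w' → a * w * b < a * w' * b)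
    (T T' : MonoidAlgebra K (FreeMonoid X) →ₗ[K] MonoidAlgebra K (FreeMonoid X))
    (hT : IsReductionOperator T) (hT' : IsReductionOperator T')
    (hker : LinearMap.ker T ≤ LinearMap.ker T')
    (w : FreeMonoid X) (f : MonoidAlgebra K (FreeMonoid X))
    (hf : HasTypeDecomp T w f) :
    HasTypeDecomp T' w f :=
  stmt_14_general hmul T T' hT hT' hker w f hf
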